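/- The lifted heap disjunction ‖ on Option (Finset (V × V)) is associative: for all x, y, z, (x ‖ y) ‖ z = x ‖ (y ‖ z). -/

import Mathlib

variable {V : Type*}

/-- The vertex set of a finite directed edge set. -/
noncomputable def verts [DecidableEq V] (E : Finset (V × V)) : Finset V :=
  E.image Prod.fst ∪ E.image Prod.snd

open scoped Classical in
/-- Heap disjunction lifted to possibly-inconsistent heaps. -/
noncomputable def hdisj [DecidableEq V] :
    Option (Finset (V × V)) → Option (Finset (V × V)) → Option (Finset (V × V))
  | some E₁, some E₂ => if Disjoint (verts E₁) (verts E₂) then some (E₁ ∪ E₂) else none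
  | none, _ => none
  | _, none => none

/-! Both bracketings of three defined heaps are defined exactly when the three vertex sets are
pairwise disjoint (the vertex set of a union being the union of the vertex sets), and then both
equal the union of the three edge sets; an undefined operand makes both sides undefined. -/

section HeapDisjunction

variable [DecidableEq V]

theorem verts_union (E₁ E₂ : Finset (V × V)) : verts (E₁ ∪ E₂) = verts E₁ ∪ verts E₂ := by
  simp only [verts, Finset.image_union]
  ac_rfl

@[simp]
theorem hdisj_none_left (x : Option (Finset (V × V))) : hdisj none x = none := by
  cases x <;> rfl

@[simp]
theorem hdisj_none_right (x : Option (Finset (V × V))) : hdisj x none = none := by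
  cases x <;> rfl

@[simp]
theorem hdisj_some_some (E₁ E₂ : Finset (V × V)) :
    hdisj (some E₁) (some E₂) =
      if Disjoint (verts E₁) (verts E₂) then some (E₁ ∪ E₂) else none := by
  rw [hdisj]

theorem hdisj_hdisj_some_left (E₁ E₂ E₃ : Finset (V × V)) :
    hdisj (hdisj (some E₁) (some E₂)) (some E₃) =
      if Disjoint (verts E₁) (verts E₂) ∧ Disjoint (verts E₁) (verts E₃) ∧
          Disjoint (verts E₂) (verts E₃)
      then some (E₁ ∪ E₂ ∪ E₃) else none := by
  by_cases h₁₂ : Disjoint (verts E₁) (verts E₂)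
  · simp [h₁₂, verts_union, Finset.disjoint_union_left]
  · simp [h₁₂]

theorem hdisj_hdisj_some_right (E₁ E₂ E₃ : Finset (V × V)) :
    hdisj (some E₁) (hdisj (some E₂) (some E₃)) =
      if Disjoint (verts E₁) (verts E₂) ∧ Disjoint (verts E₁) (verts E₃) ∧
          Disjoint (verts E₂) (verts E₃)
      then some (E₁ ∪ E₂ ∪ E₃) else none := by
  by_cases h₂₃ : Disjoint (verts E₂) (verts E₃)
  · simp [h₂₃, verts_union, Finset.disjoint_union_right, Finset.union_assoc]
  · simp [h₂₃]

end HeapDisjunction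

theorem hdisj_assoc [DecidableEq V] (x y z : Option (Finset (V × V))) :
    hdisj (hdisj x y) z = hdisj x (hdisj y z) := by
  rcases x with _ | E₁ <;> rcases y with _ | E₂ <;> rcases z with _ | E₃ <;>
    simp only [hdisj_none_left, hdisj_none_right, hdisj_hdisj_some_left,
      hdisj_hdisj_some_right]
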